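/- arXiv:2406.15184 — 4 statements merged into one kernel-verified Lean document; each statement's English description precedes it below -/
import Mathlib

section
/- Rosenberg's Theorem on minority minimal clones. Let A be a set with |A| ≥ 2. A minority operation f on A generates a minimal clone if and only if there is an elementary abelian 2-group structure (A;+) such that f(x₁,x₂,x₃) = x₁ + x₂ + x₃ for all x₁,x₂,x₃ ∈ A. -/
universe u

/-- The type of finitary operations (of positive arity `n + 1`) on `A`. -/
abbrev Ops (A : Type u) : Type u := Σ n : ℕ, (Fin (n + 1) → A) → A

/-- A set of finitary operations on `A` is a clone if it contains all projection
operations and is closed under composition. -/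
def IsClone {A : Type u} (C : Set (Ops A)) : Prop :=
  (∀ (n : ℕ) (i : Fin (n + 1)), (⟨n, fun x => x i⟩ : Ops A) ∈ C) ∧
  ∀ (n m : ℕ) (f : (Fin (n + 1) → A) → A) (g : Fin (n + 1) → (Fin (m + 1) → A) → A),
    (⟨n, f⟩ : Ops A) ∈ C → (∀ i, (⟨m, g i⟩ : Ops A) ∈ C) →
    (⟨m, fun x => f fun i => g i x⟩ : Ops A) ∈ C

/-- The clone generated by a set `F` of operations: the least clone containing `F`. -/
def cloneGen {A : Type u} (F : Set (Ops A)) : Set (Ops A) :=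
  ⋂₀ {C : Set (Ops A) | IsClone C ∧ F ⊆ C}

/-- The clone of all projection operations on `A`. -/
def projClone (A : Type u) : Set (Ops A) :=
  {f : Ops A | ∃ i : Fin (f.1 + 1), f.2 = fun x => x i}

/-- A clone `M` is maximal if it is a proper subclone of the clone of all operations
and the clone of all operations is the only clone properly containing it. -/
def IsMaximalClone {A : Type u} (M : Set (Ops A)) : Prop :=
  IsClone M ∧ M ≠ Set.univ ∧
    ∀ D : Set (Ops A), IsClone D → M ⊆ D → D = M ∨ D = Set.univ

/-- A clone `C` is minimal if the clone of projections is its unique proper subclone. -/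
def IsMinimalClone {A : Type u} (C : Set (Ops A)) : Prop :=
  IsClone C ∧ C ≠ projClone A ∧
    ∀ D : Set (Ops A), IsClone D → D ⊆ C → D = projClone A ∨ D = C

/-- An `n`-ary operation `f` preserves a `k`-ary relation `ρ` if applying `f`
coordinatewise to tuples from `ρ` always yields a tuple in `ρ`. -/
def Preserves {A : Type u} {n k : ℕ} (f : (Fin n → A) → A) (ρ : Set (Fin k → A)) : Prop :=
  ∀ t : Fin n → Fin k → A, (∀ i, t i ∈ ρ) → (fun j => f fun i => t i j) ∈ ρ

/-- `Pol ρ` is the clone of all operations preserving the relation `ρ`. -/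
def Pol {A : Type u} {k : ℕ} (ρ : Set (Fin k → A)) : Set (Ops A) :=
  {f : Ops A | Preserves f.2 ρ}

/-- A minority operation: a ternary operation satisfying
`f(x,y,y) = f(y,x,y) = f(y,y,x) = x`. -/
def IsMinority {A : Type u} (f : (Fin 3 → A) → A) : Prop :=
  ∀ x y : A, f ![x, y, y] = x ∧ f ![y, x, y] = x ∧ f ![y, y, x] = x

section Basics
variable {A : Type u}

theorem isClone_cloneGen (F : Set (Ops A)) : IsClone (cloneGen F) := by
  constructor
  · intro n i
    exact Set.mem_sInter.mpr fun C hC => hC.1.1 n i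
  · intro n m g gs hg hgs
    exact Set.mem_sInter.mpr fun C hC =>
      hC.1.2 n m g gs (Set.mem_sInter.mp hg C hC) fun i => Set.mem_sInter.mp (hgs i) C hC

theorem subset_cloneGen (F : Set (Ops A)) : F ⊆ cloneGen F :=
  fun g hg => Set.mem_sInter.mpr fun _C hC => hC.2 hg

theorem cloneGen_subset {F C : Set (Ops A)} (h1 : IsClone C) (h2 : F ⊆ C) :
    cloneGen F ⊆ C := fun _g hg => Set.mem_sInter.mp hg C ⟨h1, h2⟩

theorem isClone_projClone : IsClone (projClone A) := by
  constructor
  · exact fun n i => ⟨i, rfl⟩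
  · rintro n m g gs ⟨i, hi⟩ hgs
    obtain ⟨j, hj⟩ := hgs i
    refine ⟨j, ?_⟩
    funext x
    show g (fun k => gs k x) = x j
    rw [show g = fun v => v i from hi]
    show gs i x = x j
    rw [show gs i = fun v => v j from hj]

theorem projClone_subset {C : Set (Ops A)} (hC : IsClone C) : projClone A ⊆ C := by
  rintro ⟨n, g⟩ ⟨i, hi⟩
  rw [show (⟨n, g⟩ : Ops A) = ⟨n, fun x => x i⟩ from congrArg (Sigma.mk n) hi]
  exact hC.1 n i

end Basics

section Backward

variable {A : Type u} [Nontrivial A] [AddCommGroup A]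

omit [Nontrivial A] in
theorem odd_nsmul_eq (h2 : ∀ a : A, a + a = 0) {k : ℕ} (hk : Odd k) (v : A) :
    k • v = v := by
  obtain ⟨m, rfl⟩ := hk
  rw [add_nsmul, mul_nsmul, two_nsmul, h2, smul_zero, one_nsmul, zero_add]

/-- The clone of odd sums. -/
def oddSumClone (A : Type u) [AddCommGroup A] [Module (ZMod 2) A] : Set (Ops A) :=
  {g : Ops A | ∃ c : Fin (g.1 + 1) → ZMod 2, (∑ i, c i) = 1 ∧
    ∀ x, g.2 x = ∑ i, c i • x i}

variable [Module (ZMod 2) A]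

omit [Nontrivial A] in
theorem isClone_oddSumClone : IsClone (oddSumClone A) := by
  constructor
  · intro n i
    refine ⟨fun j => if j = i then 1 else 0, by simp, fun x => ?_⟩
    show x i = _
    simp [ite_smul]
  · rintro n m g gs ⟨c, hc1, hc2⟩ hgs
    choose d hd1 hd2 using hgs
    dsimp only at c hc1 hc2 d hd1 hd2
    refine ⟨fun j => ∑ i, c i * d i j, ?_, fun x => ?_⟩
    · rw [Finset.sum_comm]
      calc ∑ i, ∑ j, c i * d i j = ∑ i : Fin (n+1), c i * ∑ j, d i j := by
            simp [Finset.mul_sum]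
        _ = 1 := by simp only [hd1, mul_one]; exact hc1
    · show g (fun i => gs i x) = _
      rw [hc2 (fun i => gs i x)]
      calc ∑ i, c i • (gs i x) = ∑ i, ∑ j, (c i * d i j) • x j := by
            refine Finset.sum_congr rfl fun i _ => ?_
            rw [hd2 i, Finset.smul_sum]
            simp [smul_smul]
        _ = ∑ j, (∑ i, c i * d i j) • x j := by
            rw [Finset.sum_comm]
            simp [Finset.sum_smul]

end Backward

theorem zmod2_eq_zero_or_one : ∀ z : ZMod 2, z = 0 ∨ z = 1 := by decide

section Back2
variable {A : Type u} [Nontrivial A] [AddCommGroup A] [Module (ZMod 2) A]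
variable (f : (Fin 3 → A) → A)

omit [Nontrivial A] in
theorem f_mem_oddSum (hsum : ∀ x : Fin 3 → A, f x = x 0 + x 1 + x 2) :
    (⟨2, f⟩ : Ops A) ∈ oddSumClone A := by
  refine ⟨![1, 1, 1], ?_, fun x => ?_⟩
  · show ∑ i, (![1, 1, 1] : Fin 3 → ZMod 2) i = 1
    decide
  show f x = _
  rw [hsum x, Fin.sum_univ_three]
  simp

omit [Nontrivial A] in
theorem sum_mem_gen (hsum : ∀ x : Fin 3 → A, f x = x 0 + x 1 + x 2) :
    ∀ (k n : ℕ) (S : Finset (Fin (n + 1))), S.card = k → Odd k →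
      (⟨n, fun x => ∑ i ∈ S, x i⟩ : Ops A) ∈ cloneGen {(⟨2, f⟩ : Ops A)} := by
  intro k
  induction k using Nat.strong_induction_on with
  | _ k IH =>
    intro n S hcard hodd
    have hC := isClone_cloneGen ({(⟨2, f⟩ : Ops A)})
    rcases eq_or_ne k 1 with h1 | h1
    · subst h1
      obtain ⟨i, hi⟩ := Finset.card_eq_one.mp hcard
      have he : (fun x : Fin (n+1) → A => ∑ i ∈ S, x i) = fun x => x i := by
        funext x; rw [hi, Finset.sum_singleton]
      rw [show (⟨n, fun x => ∑ i ∈ S, x i⟩ : Ops A) = ⟨n, fun x => x i⟩ from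
        congrArg (Sigma.mk n) he]
      exact hC.1 n i
    · -- k ≥ 3
      have hk3 : 3 ≤ k := by
        rcases hodd with ⟨m, rfl⟩
        omega
      have hS1 : S.Nonempty := by
        rw [← Finset.card_pos, hcard]; omega
      obtain ⟨a, ha⟩ := hS1
      have hS2 : (S.erase a).Nonempty := by
        rw [← Finset.card_pos, Finset.card_erase_of_mem ha, hcard]; omega
      obtain ⟨b, hb⟩ := hS2
      set U := (S.erase a).erase b with hU
      have hUcard : U.card = k - 2 := by
        rw [hU, Finset.card_erase_of_mem hb, Finset.card_erase_of_mem ha, hcard]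
        omega
      have hUodd : Odd (k - 2) := Nat.Odd.sub_even (by omega) hodd (by decide)
      have hg' := IH (k - 2) (by omega) n U hUcard hUodd
      have hmemf : (⟨2, f⟩ : Ops A) ∈ cloneGen {(⟨2, f⟩ : Ops A)} :=
        subset_cloneGen _ rfl
      have hcomp := hC.2 2 n f
        ![fun x => x a, fun x => x b, fun x => ∑ i ∈ U, x i]
        hmemf (by
          intro i
          fin_cases i
          · exact hC.1 n a
          · exact hC.1 n b
          · exact hg')
      have heq : (fun x : Fin (n+1) → A =>
          f fun i => ![fun x => x a, fun x => x b, fun x => ∑ i ∈ U, x i] i x) =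
          fun x => ∑ i ∈ S, x i := by
        funext x
        have h3 : (fun i => ![fun x => x a, fun x => x b,
            fun x => ∑ i ∈ U, x i] i x) = ![x a, x b, ∑ i ∈ U, x i] := by
          funext i; fin_cases i <;> rfl
        rw [h3, hsum]
        show x a + x b + (∑ i ∈ U, x i) = _
        rw [add_assoc, Finset.add_sum_erase _ _ hb, Finset.add_sum_erase _ _ ha]
      rw [show (⟨n, fun x : Fin (n+1) → A =>
          f fun i => ![fun x => x a, fun x => x b, fun x => ∑ i ∈ U, x i] i x⟩ : Ops A)
          = ⟨n, fun x => ∑ i ∈ S, x i⟩ from congrArg (Sigma.mk n) heq] at hcomp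
      exact hcomp

omit [Nontrivial A] in
theorem gen_eq_oddSum (h2 : ∀ a : A, a + a = 0)
    (hsum : ∀ x : Fin 3 → A, f x = x 0 + x 1 + x 2) :
    cloneGen {(⟨2, f⟩ : Ops A)} = oddSumClone A := by
  apply le_antisymm
  · exact cloneGen_subset isClone_oddSumClone
      (Set.singleton_subset_iff.mpr (f_mem_oddSum f hsum))
  · rintro ⟨n, g⟩ ⟨c, hc1, hc2⟩
    dsimp only at c hc1 hc2
    set S : Finset (Fin (n+1)) := Finset.univ.filter (fun i => c i = 1) with hS
    have hgs : g = fun x => ∑ i ∈ S, x i := by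
      funext x
      rw [hc2 x]
      rw [← Finset.sum_filter_of_ne (p := fun i => c i = 1)
        (by
          intro i _ hne
          rcases zmod2_eq_zero_or_one (c i) with h | h
          · rw [h, zero_smul] at hne; exact absurd rfl hne
          · exact h)]
      refine Finset.sum_congr rfl fun i hi => ?_
      rw [(Finset.mem_filter.mp hi).2, one_smul]
    have hcards : (S.card : ZMod 2) = 1 := by
      have : ∑ i, c i = ∑ i ∈ S, c i := by
        symm
        apply Finset.sum_filter_of_ne
        intro i _ hne
        rcases zmod2_eq_zero_or_one (c i) with h | h
        · exact absurd h hne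
        · exact h
      rw [this] at hc1
      calc (S.card : ZMod 2) = ∑ _i ∈ S, (1 : ZMod 2) := by
            rw [Finset.sum_const, nsmul_eq_mul, mul_one]
        _ = ∑ i ∈ S, c i :=
            Finset.sum_congr rfl fun i hi => ((Finset.mem_filter.mp hi).2).symm
        _ = 1 := hc1
    have hodd : Odd S.card := by
      rw [Nat.odd_iff]
      rcases Nat.mod_two_eq_zero_or_one S.card with h | h
      · exfalso
        have : (S.card : ZMod 2) = 0 := by
          have := (ZMod.natCast_eq_zero_iff S.card 2).mpr
            (Nat.dvd_of_mod_eq_zero h)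
          exact this
        rw [this] at hcards
        exact absurd hcards (by decide)
      · exact h
    rw [show (⟨n, g⟩ : Ops A) = ⟨n, fun x => ∑ i ∈ S, x i⟩ from
      congrArg (Sigma.mk n) hgs]
    exact sum_mem_gen f hsum S.card n S rfl hodd

end Back2

section Back3
variable {A : Type u} [Nontrivial A] [AddCommGroup A] [Module (ZMod 2) A]
variable (f : (Fin 3 → A) → A)

omit [Nontrivial A] in
theorem oddSum_repr {n : ℕ} {g : (Fin (n + 1) → A) → A}
    (hg : (⟨n, g⟩ : Ops A) ∈ oddSumClone A) :
    ∃ S : Finset (Fin (n + 1)), Odd S.card ∧ ∀ x, g x = ∑ i ∈ S, x i := by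
  obtain ⟨c, hc1, hc2⟩ := hg
  dsimp only at c hc1 hc2
  set S : Finset (Fin (n+1)) := Finset.univ.filter (fun i => c i = 1) with hS
  have hgs : ∀ x, g x = ∑ i ∈ S, x i := by
    intro x
    rw [hc2 x]
    rw [← Finset.sum_filter_of_ne (p := fun i => c i = 1)
      (by
        intro i _ hne
        rcases zmod2_eq_zero_or_one (c i) with h | h
        · rw [h, zero_smul] at hne; exact absurd rfl hne
        · exact h)]
    refine Finset.sum_congr rfl fun i hi => ?_
    rw [(Finset.mem_filter.mp hi).2, one_smul]
  have hcards : (S.card : ZMod 2) = 1 := by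
    have h' : ∑ i, c i = ∑ i ∈ S, c i := by
      symm
      apply Finset.sum_filter_of_ne
      intro i _ hne
      rcases zmod2_eq_zero_or_one (c i) with h | h
      · exact absurd h hne
      · exact h
    rw [h'] at hc1
    calc (S.card : ZMod 2) = ∑ _i ∈ S, (1 : ZMod 2) := by
          rw [Finset.sum_const, nsmul_eq_mul, mul_one]
      _ = ∑ i ∈ S, c i :=
          Finset.sum_congr rfl fun i hi => ((Finset.mem_filter.mp hi).2).symm
      _ = 1 := hc1
  have hodd : Odd S.card := by
    rw [Nat.odd_iff]
    rcases Nat.mod_two_eq_zero_or_one S.card with h | h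
    · exfalso
      have h0 : (S.card : ZMod 2) = 0 :=
        (ZMod.natCast_eq_zero_iff S.card 2).mpr (Nat.dvd_of_mod_eq_zero h)
      rw [h0] at hcards
      exact absurd hcards (by decide)
    · exact h
  exact ⟨S, hodd, hgs⟩

theorem backward_minimal (h2 : ∀ a : A, a + a = 0)
    (hsum : ∀ x : Fin 3 → A, f x = x 0 + x 1 + x 2) :
    IsMinimalClone (cloneGen {(⟨2, f⟩ : Ops A)}) := by
  rw [IsMinimalClone, gen_eq_oddSum f h2 hsum]
  refine ⟨isClone_oddSumClone, ?_, ?_⟩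
  · -- not the projection clone
    intro hEq
    have hfP : (⟨2, f⟩ : Ops A) ∈ projClone A := by
      rw [← hEq]; exact f_mem_oddSum f hsum
    obtain ⟨i, hi⟩ := hfP
    obtain ⟨a, ha⟩ := exists_ne (0 : A)
    have hfv : ∀ v : Fin 3 → A, f v = v i := fun v => congrFun hi v
    have e1 : a = ![(0 : A), a, 0] i := by
      have h' := hfv ![0, a, 0]
      rw [hsum] at h'
      simpa using h'
    have e2 : a = ![a, (0 : A), 0] i := by
      have h' := hfv ![a, 0, 0]
      rw [hsum] at h'
      simpa using h'
    fin_cases i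
    · simp at e1; exact ha e1
    · simp at e2; exact ha e2
    · simp at e2; exact ha e2
  · intro D hD hDsub
    by_cases hDp : D = projClone A
    · exact Or.inl hDp
    right
    have hPD : projClone A ⊆ D := projClone_subset hD
    have hex : ∃ g, g ∈ D ∧ g ∉ projClone A := by
      by_contra h
      push_neg at h
      exact hDp (le_antisymm (fun g hg => h g hg) hPD)
    obtain ⟨⟨n, g⟩, hgD, hgnp⟩ := hex
    obtain ⟨S, hodd, hgs⟩ := oddSum_repr (hDsub hgD)
    have hS1 : S.card ≠ 1 := by
      intro h1
      obtain ⟨i, hi⟩ := Finset.card_eq_one.mp h1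
      refine hgnp ⟨i, ?_⟩
      funext x
      show g x = x i
      rw [hgs x, hi, Finset.sum_singleton]
    have hk3 : 3 ≤ S.card := by
      rcases hodd with ⟨m, hm⟩; omega
    have hSne : S.Nonempty := by rw [← Finset.card_pos]; omega
    obtain ⟨a, ha⟩ := hSne
    have hSne2 : (S.erase a).Nonempty := by
      rw [← Finset.card_pos, Finset.card_erase_of_mem ha]; omega
    obtain ⟨b, hb⟩ := hSne2
    have hba : b ≠ a := Finset.ne_of_mem_erase hb
    set U := (S.erase a).erase b with hU
    have hUcard : U.card = S.card - 2 := by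
      rw [hU, Finset.card_erase_of_mem hb, Finset.card_erase_of_mem ha]
      omega
    have hUodd : Odd U.card := by
      rw [hUcard]
      exact Nat.Odd.sub_even (by omega) hodd (by decide)
    set σ : Fin (n + 1) → Fin 3 :=
      fun i => if i = a then 0 else if i = b then 1 else 2 with hσ
    have hcomp := hD.2 n 2 g (fun i => fun x => x (σ i)) hgD
      (fun i => hD.1 2 (σ i))
    have heq : (fun x : Fin 3 → A => g fun i => x (σ i)) = f := by
      funext x
      rw [hgs, hsum x]
      rw [← Finset.add_sum_erase _ _ ha, ← Finset.add_sum_erase _ _ hb]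
      have hσa : σ a = 0 := by rw [hσ]; simp
      have hσb : σ b = 1 := by rw [hσ]; simp [hba]
      have hσU : ∀ i ∈ U, x (σ i) = x 2 := by
        intro i hi
        have hia : i ≠ a := Finset.ne_of_mem_erase (Finset.mem_of_mem_erase hi)
        have hib : i ≠ b := Finset.ne_of_mem_erase hi
        rw [hσ]
        simp [hia, hib]
      rw [Finset.sum_congr rfl hσU, Finset.sum_const, odd_nsmul_eq h2 hUodd,
        hσa, hσb, ← add_assoc]
    have hfD : (⟨2, f⟩ : Ops A) ∈ D := by
      rw [show (⟨2, f⟩ : Ops A) = ⟨2, fun x : Fin 3 → A => g fun i => x (σ i)⟩ from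
        (congrArg (Sigma.mk 2) heq).symm]
      exact hcomp
    refine le_antisymm hDsub ?_
    rw [← gen_eq_oddSum f h2 hsum]
    exact cloneGen_subset hD (Set.singleton_subset_iff.mpr hfD)

end Back3

section Forward
variable {A : Type u} [Nontrivial A]

/-- Operations that act as the first projection on all 2-valued tuples form a clone. -/
def conservClone (A : Type u) : Set (Ops A) :=
  {g : Ops A | ∃ c : Fin (g.1 + 1),
    ∀ x, (∃ a b : A, ∀ i, x i = a ∨ x i = b) → g.2 x = x c}

omit [Nontrivial A] in
theorem isClone_conserv : IsClone (conservClone A) := by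
  constructor
  · exact fun n i => ⟨i, fun x _ => rfl⟩
  · rintro n m g gs ⟨c, hc⟩ hgs
    choose cs hcs using hgs
    dsimp only at c hc cs hcs
    refine ⟨cs c, fun x hx => ?_⟩
    obtain ⟨a, b, hab⟩ := hx
    have h1 : ∀ i, gs i x = x (cs i) := fun i => hcs i x ⟨a, b, hab⟩
    have h2 : g (fun i => gs i x) = (fun i => gs i x) c := by
      apply hc
      exact ⟨a, b, fun i => by rw [h1 i]; exact hab (cs i)⟩
    show g (fun i => gs i x) = x (cs c)
    rw [h2]
    exact h1 c

variable (f : (Fin 3 → A) → A)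

theorem f_not_conserv (hf : ∀ x y : A, f ![x, y, y] = x ∧ f ![y, x, y] = x ∧ f ![y, y, x] = x) :
    (⟨2, f⟩ : Ops A) ∉ conservClone A := by
  rintro ⟨c, hc⟩
  dsimp only at c hc
  obtain ⟨a, b, hab⟩ := exists_pair_ne A
  have t1 := hc ![a, b, b] ⟨a, b, by intro i; fin_cases i <;> simp⟩
  have t2 := hc ![b, a, b] ⟨a, b, by intro i; fin_cases i <;> simp⟩
  rw [(hf a b).1] at t1
  rw [(hf a b).2.1] at t2
  fin_cases c
  · exact hab (by simpa using t2)
  · exact hab (by simpa using t1)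
  · exact hab (by simpa using t1)

theorem key_lemma (hmin : IsMinimalClone (cloneGen {(⟨2, f⟩ : Ops A)}))
    (hnc : (⟨2, f⟩ : Ops A) ∉ conservClone A)
    {n : ℕ} (s : (Fin (n + 1) → A) → A)
    (hs : (⟨n, s⟩ : Ops A) ∈ cloneGen {(⟨2, f⟩ : Ops A)})
    (h2v : ∀ x : Fin (n + 1) → A, (∃ a b : A, ∀ i, x i = a ∨ x i = b) → s x = x 0) :
    ∀ x, s x = x 0 := by
  have hC := hmin.1
  have hE : IsClone (cloneGen {(⟨n, s⟩ : Ops A)}) := isClone_cloneGen _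
  have hEC : cloneGen {(⟨n, s⟩ : Ops A)} ⊆ cloneGen {(⟨2, f⟩ : Ops A)} :=
    cloneGen_subset hC (Set.singleton_subset_iff.mpr hs)
  have hsD : (⟨n, s⟩ : Ops A) ∈ conservClone A := ⟨0, h2v⟩
  rcases hmin.2.2 _ hE hEC with h | h
  · have hsP : (⟨n, s⟩ : Ops A) ∈ projClone A := by
      rw [← h]; exact subset_cloneGen _ rfl
    obtain ⟨i, hi⟩ := hsP
    have hsv : ∀ v, s v = v i := fun v => congrFun hi v
    rcases eq_or_ne i 0 with h0 | h0
    · intro x; rw [hsv x, h0]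
    · exfalso
      obtain ⟨a, b, hab⟩ := exists_pair_ne A
      set x : Fin (n + 1) → A := fun j => if j = 0 then a else b with hx
      have e1 : s x = x 0 := h2v x ⟨a, b, fun i => by
        by_cases hji : i = 0 <;> simp [hx, hji]⟩
      rw [hsv x] at e1
      simp only [hx, if_pos rfl, h0, if_neg h0] at e1
      exact hab e1.symm
  · exfalso
    have hfE : (⟨2, f⟩ : Ops A) ∈ cloneGen {(⟨n, s⟩ : Ops A)} := by
      rw [h]; exact subset_cloneGen _ rfl
    have hsub : cloneGen {(⟨n, s⟩ : Ops A)} ⊆ conservClone A :=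
      cloneGen_subset isClone_conserv (Set.singleton_subset_iff.mpr hsD)
    exact hnc (hsub hfE)

omit [Nontrivial A] in
theorem mem_comp3 {C : Set (Ops A)} (hC : IsClone C) (hfC : (⟨2, f⟩ : Ops A) ∈ C)
    {m : ℕ} {g0 g1 g2 : (Fin (m + 1) → A) → A}
    (h0 : (⟨m, g0⟩ : Ops A) ∈ C) (h1 : (⟨m, g1⟩ : Ops A) ∈ C)
    (h2 : (⟨m, g2⟩ : Ops A) ∈ C) :
    (⟨m, fun x => f ![g0 x, g1 x, g2 x]⟩ : Ops A) ∈ C := by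
  have hcomp := hC.2 2 m f ![g0, g1, g2] hfC (by
    intro i; fin_cases i
    · exact h0
    · exact h1
    · exact h2)
  have he : (fun x : Fin (m + 1) → A => f fun i => ![g0, g1, g2] i x) =
      fun x => f ![g0 x, g1 x, g2 x] := by
    funext x; congr 1; funext i; fin_cases i <;> rfl
  rw [show (⟨m, fun x => f ![g0 x, g1 x, g2 x]⟩ : Ops A) =
    ⟨m, fun x : Fin (m + 1) → A => f fun i => ![g0, g1, g2] i x⟩ from
    congrArg (Sigma.mk m) he.symm]
  exact hcomp

end Forward

section Forward2
variable {A : Type u} [Nontrivial A] (f : (Fin 3 → A) → A)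

theorem forward_group (hf : ∀ x y : A, f ![x, y, y] = x ∧ f ![y, x, y] = x ∧ f ![y, y, x] = x)
    (hmin : IsMinimalClone (cloneGen {(⟨2, f⟩ : Ops A)})) :
    ∃ _ : AddCommGroup A, (∀ a : A, a + a = 0) ∧
      ∀ x : Fin 3 → A, f x = x 0 + x 1 + x 2 := by
  have mA : ∀ x y : A, f ![x, y, y] = x := fun x y => (hf x y).1
  have mB : ∀ x y : A, f ![x, y, x] = y := fun x y => (hf y x).2.1
  have mC : ∀ x y : A, f ![x, x, y] = y := fun x y => (hf y x).2.2
  have hnc := f_not_conserv f hf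
  have hC : IsClone (cloneGen {(⟨2, f⟩ : Ops A)}) := hmin.1
  have hfC : (⟨2, f⟩ : Ops A) ∈ cloneGen {(⟨2, f⟩ : Ops A)} := subset_cloneGen _ rfl
  -- memberships
  have B3 : (⟨2, fun x : Fin 3 → A => f ![x 0, x 1, x 2]⟩ : Ops A) ∈
      cloneGen {(⟨2, f⟩ : Ops A)} :=
    mem_comp3 f hC hfC (hC.1 2 0) (hC.1 2 1) (hC.1 2 2)
  have hs2 : (⟨2, fun x : Fin 3 → A => f ![f ![x 0, x 1, x 2], x 1, x 2]⟩ : Ops A) ∈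
      cloneGen {(⟨2, f⟩ : Ops A)} :=
    mem_comp3 f hC hfC B3 (hC.1 2 1) (hC.1 2 2)
  have hT1 : (⟨2, fun x : Fin 3 → A => f ![x 1, f ![x 0, x 1, x 2], x 2]⟩ : Ops A) ∈
      cloneGen {(⟨2, f⟩ : Ops A)} :=
    mem_comp3 f hC hfC (hC.1 2 1) B3 (hC.1 2 2)
  have hT2 : (⟨2, fun x : Fin 3 → A => f ![f ![x 0, x 1, x 2], x 2, x 1]⟩ : Ops A) ∈
      cloneGen {(⟨2, f⟩ : Ops A)} :=
    mem_comp3 f hC hfC B3 (hC.1 2 2) (hC.1 2 1)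
  have B4 : (⟨3, fun x : Fin 4 → A => f ![x 0, x 1, x 2]⟩ : Ops A) ∈
      cloneGen {(⟨2, f⟩ : Ops A)} :=
    mem_comp3 f hC hfC (hC.1 3 0) (hC.1 3 1) (hC.1 3 2)
  have B4b : (⟨3, fun x : Fin 4 → A => f ![f ![x 0, x 1, x 2], x 2, x 3]⟩ : Ops A) ∈
      cloneGen {(⟨2, f⟩ : Ops A)} :=
    mem_comp3 f hC hfC B4 (hC.1 3 2) (hC.1 3 3)
  have hV : (⟨3, fun x : Fin 4 → A =>
      f ![f ![f ![x 0, x 1, x 2], x 2, x 3], x 1, x 3]⟩ : Ops A) ∈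
      cloneGen {(⟨2, f⟩ : Ops A)} :=
    mem_comp3 f hC hfC B4b (hC.1 3 1) (hC.1 3 3)
  -- identities via the key lemma
  have kInv := key_lemma f hmin hnc _ hs2 (by
    rintro x ⟨a, b, hab⟩
    rcases hab 0 with h0 | h0 <;> rcases hab 1 with h1 | h1 <;>
      rcases hab 2 with h2 | h2 <;> simp [h0, h1, h2, mA, mB, mC])
  have inv : ∀ a b c : A, f ![f ![a, b, c], b, c] = a := by
    intro a b c; simpa using kInv ![a, b, c]
  have kT1 := key_lemma f hmin hnc _ hT1 (by
    rintro x ⟨a, b, hab⟩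
    rcases hab 0 with h0 | h0 <;> rcases hab 1 with h1 | h1 <;>
      rcases hab 2 with h2 | h2 <;> simp [h0, h1, h2, mA, mB, mC])
  have I2 : ∀ a b c : A, f ![b, f ![a, b, c], c] = a := by
    intro a b c; simpa using kT1 ![a, b, c]
  have kT2 := key_lemma f hmin hnc _ hT2 (by
    rintro x ⟨a, b, hab⟩
    rcases hab 0 with h0 | h0 <;> rcases hab 1 with h1 | h1 <;>
      rcases hab 2 with h2 | h2 <;> simp [h0, h1, h2, mA, mB, mC])
  have I3 : ∀ a b c : A, f ![f ![a, b, c], c, b] = a := by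
    intro a b c; simpa using kT2 ![a, b, c]
  have kV := key_lemma f hmin hnc _ hV (by
    rintro x ⟨a, b, hab⟩
    rcases hab 0 with h0 | h0 <;> rcases hab 1 with h1 | h1 <;>
      rcases hab 2 with h2 | h2 <;> rcases hab 3 with h3 | h3 <;>
      simp [h0, h1, h2, h3, mA, mB, mC])
  have I4 : ∀ a b c d : A, f ![f ![f ![a, b, c], c, d], b, d] = a := by
    intro a b c d; simpa using kV ![a, b, c, d]
  -- symmetry
  have sym12 : ∀ a b c : A, f ![b, a, c] = f ![a, b, c] := by
    intro a b c
    have h := I2 (f ![a, b, c]) b c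
    rwa [inv a b c] at h
  have sym23 : ∀ a b c : A, f ![a, c, b] = f ![a, b, c] := by
    intro a b c
    have h := I3 (f ![a, b, c]) b c
    rwa [inv a b c] at h
  have star : ∀ a b c d : A, f ![f ![a, b, c], c, d] = f ![a, b, d] := by
    intro a b c d
    have hL := I4 a b c d
    calc f ![f ![a, b, c], c, d]
        = f ![f ![f ![f ![a, b, c], c, d], b, d], b, d] := (inv _ b d).symm
      _ = f ![a, b, d] := by rw [hL]
  have rot : ∀ a b c : A, f ![b, c, a] = f ![a, b, c] := by
    intro a b c
    calc f ![b, c, a] = f ![c, b, a] := sym12 c b a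
      _ = f ![c, a, b] := (sym23 c b a).symm
      _ = f ![a, c, b] := sym12 a c b
      _ = f ![a, b, c] := sym23 a b c
  -- the group
  have : Nonempty A := inferInstance
  let z : A := Classical.arbitrary A
  letI addA : Add A := ⟨fun a b => f ![a, b, z]⟩
  letI negA : Neg A := ⟨fun a => a⟩
  letI zeroA : Zero A := ⟨z⟩
  have hassoc : ∀ a b c : A, a + b + c = a + (b + c) := by
    intro a b c
    show f ![f ![a, b, z], c, z] = f ![a, f ![b, c, z], z]
    have e1 : f ![f ![a, b, z], c, z] = f ![a, b, c] := by
      rw [sym23 (f ![a, b, z]) z c, star a b z c]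
    have e2 : f ![a, f ![b, c, z], z] = f ![a, b, c] := by
      rw [sym12 (f ![b, c, z]) a z, sym23 (f ![b, c, z]) z a, star b c z a, rot a b c]
    rw [e1, e2]
  have hzero_add : ∀ a : A, 0 + a = a := by
    intro a; show f ![z, a, z] = a; exact mB z a
  have hneg_add : ∀ a : A, -a + a = 0 := by
    intro a; show f ![a, a, z] = z; exact mC a z
  letI grpA : AddGroup A := AddGroup.ofLeftAxioms hassoc hzero_add hneg_add
  have hcomm : ∀ a b : A, a + b = b + a := by
    intro a b
    show f ![a, b, z] = f ![b, a, z]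
    exact (sym12 a b z).symm
  refine ⟨{ grpA with add_comm := hcomm }, fun a => ?_, fun x => ?_⟩
  · show f ![a, a, z] = z
    exact mC a z
  · have hx : x = ![x 0, x 1, x 2] := by funext i; fin_cases i <;> rfl
    show f x = f ![f ![x 0, x 1, z], x 2, z]
    conv_lhs => rw [hx]
    rw [sym23 (f ![x 0, x 1, z]) z (x 2), star (x 0) (x 1) z (x 2)]

end Forward2

/-- **Rosenberg's Theorem on minority minimal clones.**  Let `A` be a set with at least
two elements.  A minority operation `f` on `A` generates a minimal clone if and only if
there is an elementary abelian 2-group structure `(A; +)` such that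
`f x₁ x₂ x₃ = x₁ + x₂ + x₃`. -/
theorem rosenberg_minority_minimal {A : Type u} [Nontrivial A]
    (f : (Fin 3 → A) → A) (hf : IsMinority f) :
    IsMinimalClone (cloneGen {(⟨2, f⟩ : Ops A)}) ↔
      ∃ _ : AddCommGroup A, (∀ a : A, a + a = 0) ∧
        ∀ x : Fin 3 → A, f x = x 0 + x 1 + x 2 := by
  constructor
  · intro hmin
    exact forward_group f hf hmin
  · rintro ⟨inst, h2, hsum⟩
    letI := inst
    letI : Module (ZMod 2) A :=
      AddCommGroup.zmodModule (n := 2) (fun x => by rw [two_nsmul]; exact h2 x)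
    exact backward_minimal f h2 hsum
end

section
/- Kuznetsov's Theorem on maximal clones. Let A be a finite set with |A| ≥ 2. Then every proper subclone of O_A is contained in a maximal clone on A, and the number of maximal clones on A is finite. -/
universe u

/-!
A clone containing every ternary operation contains every operation: an operation of arity
`n + 2` is assembled from its sections `f (·, b)` by a case distinction on the last argument,
and each case split is a composition with the ternary operation `if y₀ = b then y₁ else y₂`.
Since there are only finitely many ternary operations, the union of a chain of proper clones is
again proper, and Zorn's lemma yields a maximal clone above any proper clone. A maximal clone `M`
equals `Pol ρ` for the relation `ρ` of arity `|A|³` whose tuples are the tables of the ternary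
operations of `M`: `Pol ρ` is a clone containing `M` with the same ternary part, so it is not
the clone of all operations. Hence maximal clones are determined by relations of one fixed arity
on `A`, of which there are finitely many.
-/

section

variable {A : Type u}

def ternaryOps (A : Type u) : Set (Ops A) :=
  Set.range fun h : (Fin 3 → A) → A => (⟨2, h⟩ : Ops A)

lemma isClone_pol {k : ℕ} (ρ : Set (Fin k → A)) : IsClone (Pol ρ) :=
  ⟨fun _ i _ ht => ht i, fun _ _ _ _ hf hg t ht => hf _ fun i => hg i t ht⟩

lemma IsClone.sUnion_of_isChain {c : Set (Set (Ops A))} (hc : ∀ D ∈ c, IsClone D)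
    (hchain : IsChain (· ⊆ ·) c) (hne : c.Nonempty) : IsClone (⋃₀ c) := by
  obtain ⟨D₀, hD₀⟩ := hne
  refine ⟨fun n i => ⟨D₀, hD₀, (hc D₀ hD₀).1 n i⟩, fun n m f g hf hg => ?_⟩
  have hsub : insert (⟨n, f⟩ : Ops A) (Set.range fun i => (⟨m, g i⟩ : Ops A)) ⊆ ⋃₀ c := by
    rintro p (rfl | ⟨i, rfl⟩)
    exacts [hf, hg i]
  obtain ⟨D, hD, hsD⟩ := hchain.directedOn.exists_mem_subset_of_finite_of_subset_sUnion
    ⟨D₀, hD₀⟩ ((Set.finite_range _).insert _) hsub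
  exact ⟨D, hD, (hc D hD).2 n m f g (hsD (Set.mem_insert _ _))
    fun i => hsD (Set.mem_insert_of_mem _ ⟨i, rfl⟩)⟩

variable [Finite A]

lemma finite_ternaryOps : (ternaryOps A).Finite :=
  Set.finite_range _

lemma IsClone.mem_of_forall_snoc_mem {C : Set (Ops A)} (hC : IsClone C)
    (h3 : ternaryOps A ⊆ C) {n : ℕ} {f : (Fin (n + 2) → A) → A}
    (hf : ∀ b : A, (⟨n, fun y => f (Fin.snoc y b)⟩ : Ops A) ∈ C) :
    (⟨n + 1, f⟩ : Ops A) ∈ C := by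
  classical
  have := Fintype.ofFinite A
  suffices h : ∀ s : Finset A,
      (⟨n + 1, fun x => if x (Fin.last _) ∈ s then f x else x 0⟩ : Ops A) ∈ C by
    simpa using h Finset.univ
  intro s
  induction s using Finset.induction_on with
  | empty => simpa using hC.1 (n + 1) 0
  | insert b s _ ih =>
    have hfb : (⟨n + 1, fun x => f (Fin.snoc (Fin.init x) b)⟩ : Ops A) ∈ C :=
      hC.2 n (n + 1) _ (fun i x => x i.castSucc) (hf b) fun i => hC.1 (n + 1) i.castSucc
    have hsplit := hC.2 2 (n + 1) (fun y => if y 0 = b then y 1 else y 2)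
      ![fun x => x (Fin.last _), fun x => f (Fin.snoc (Fin.init x) b),
        fun x => if x (Fin.last _) ∈ s then f x else x 0]
      (h3 ⟨_, rfl⟩) (Fin.forall_fin_succ.2 ⟨hC.1 _ _, Fin.forall_fin_succ.2
        ⟨hfb, Fin.forall_fin_succ.2 ⟨ih, finZeroElim⟩⟩⟩)
    convert hsplit using 3 with x
    by_cases hb : x (Fin.last _) = b
    · subst hb
      simp
    · simp [hb]

lemma IsClone.eq_univ_of_ternaryOps_subset {C : Set (Ops A)} (hC : IsClone C)
    (h3 : ternaryOps A ⊆ C) : C = Set.univ := by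
  have hmem : ∀ (n : ℕ) (f : (Fin (n + 1) → A) → A), (⟨n, f⟩ : Ops A) ∈ C := by
    intro n
    induction n with
    | zero =>
      intro f
      convert hC.2 2 0 (fun y => f fun _ => y 0) (fun _ x => x 0) (h3 ⟨_, rfl⟩)
        (fun _ => hC.1 0 0) using 3 with x
      exact congrArg f (funext fun i => congrArg x (Fin.fin_one_eq_zero i))
    | succ n ih => exact fun f => hC.mem_of_forall_snoc_mem h3 fun b => ih _
  exact Set.eq_univ_of_forall fun ⟨n, f⟩ => hmem n f

theorem exists_isMaximalClone_superset {C : Set (Ops A)} (hC : IsClone C)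
    (hCne : C ≠ Set.univ) : ∃ M : Set (Ops A), IsMaximalClone M ∧ C ⊆ M := by
  let S := {D : Set (Ops A) | IsClone D ∧ C ⊆ D ∧ D ≠ Set.univ}
  have hchain : ∀ c ⊆ S, IsChain (· ⊆ ·) c → c.Nonempty → ∃ ub ∈ S, ∀ D ∈ c, D ⊆ ub := by
    intro c hcS hc hne
    have hclone : IsClone (⋃₀ c) :=
      IsClone.sUnion_of_isChain (fun D hD => (hcS hD).1) hc hne
    refine ⟨⋃₀ c, ⟨hclone, ?_, ?_⟩, fun D => Set.subset_sUnion_of_mem⟩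
    · obtain ⟨D, hD⟩ := hne
      exact (hcS hD).2.1.trans (Set.subset_sUnion_of_mem hD)
    · intro huniv
      obtain ⟨D, hD, h3⟩ := hc.directedOn.exists_mem_subset_of_finite_of_subset_sUnion hne
        finite_ternaryOps (huniv ▸ Set.subset_univ _)
      exact (hcS hD).2.2 ((hcS hD).1.eq_univ_of_ternaryOps_subset h3)
  obtain ⟨M, hCM, hM⟩ := zorn_subset_nonempty S hchain C ⟨hC, subset_rfl, hCne⟩
  refine ⟨M, ⟨hM.prop.1, hM.prop.2.2, fun D hD hMD => ?_⟩, hCM⟩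
  by_cases hDu : D = Set.univ
  · exact Or.inr hDu
  · exact Or.inl (hMD.antisymm' (hM.2 ⟨hD, hM.prop.2.1.trans hMD, hDu⟩ hMD))

/-- The relation whose tuples are the value tables of the ternary operations in `S`, listed
along a fixed enumeration of `A³`. -/
noncomputable def ternaryRel (S : Set (Ops A)) : Set (Fin (Nat.card (Fin 3 → A)) → A) :=
  {t | ∃ h : (Fin 3 → A) → A, (⟨2, h⟩ : Ops A) ∈ S ∧ t = h ∘ (Finite.equivFin _).symm}

variable {M : Set (Ops A)}

lemma IsClone.subset_pol_ternaryRel (hM : IsClone M) : M ⊆ Pol (ternaryRel M) := by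
  rintro ⟨n, f⟩ hf t ht
  choose h hh hte using ht
  refine ⟨fun y => f fun i => h i y, hM.2 n 2 f h hf hh, funext fun j => ?_⟩
  simp [hte]

lemma IsClone.ternaryOps_inter_pol_ternaryRel_subset (hM : IsClone M) :
    ternaryOps A ∩ Pol (ternaryRel M) ⊆ M := by
  rintro _ ⟨⟨h, rfl⟩, hh⟩
  obtain ⟨h', hh', heq⟩ := hh (fun i j => (Finite.equivFin _).symm j i)
    fun i => ⟨fun y => y i, hM.1 2 i, rfl⟩
  have : h = h' := funext fun y => by simpa using congrFun heq (Finite.equivFin _ y)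
  exact this ▸ hh'

lemma IsMaximalClone.eq_pol_ternaryRel (hM : IsMaximalClone M) : M = Pol (ternaryRel M) := by
  obtain ⟨hclone, hne, hmax⟩ := hM
  refine ((hmax _ (isClone_pol _) hclone.subset_pol_ternaryRel).resolve_right
    fun huniv => hne ?_).symm
  refine hclone.eq_univ_of_ternaryOps_subset fun f hf => ?_
  exact hclone.ternaryOps_inter_pol_ternaryRel_subset ⟨hf, huniv ▸ Set.mem_univ f⟩

theorem finite_setOf_isMaximalClone : {M : Set (Ops A) | IsMaximalClone M}.Finite :=
  (Set.finite_range fun ρ : Set (Fin (Nat.card (Fin 3 → A)) → A) => Pol ρ).subset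
    fun _ hM => ⟨_, (IsMaximalClone.eq_pol_ternaryRel hM).symm⟩

end

theorem kuznetsov_maximal_clones_general {A : Type u} [Fintype A] :
    (∀ C : Set (Ops A), IsClone C → C ≠ Set.univ →
        ∃ M : Set (Ops A), IsMaximalClone M ∧ C ⊆ M) ∧
    {M : Set (Ops A) | IsMaximalClone M}.Finite :=
  ⟨fun _ => exists_isMaximalClone_superset, finite_setOf_isMaximalClone⟩

/-- **Kuznetsov's Theorem on maximal clones.**  Let `A` be a finite set with `|A| ≥ 2`.
Every proper subclone of the clone of all operations on `A` is contained in a maximal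
clone, and the number of maximal clones on `A` is finite. -/
theorem kuznetsov_maximal_clones {A : Type u} [Fintype A] (hA : 2 ≤ Fintype.card A) :
    (∀ C : Set (Ops A), IsClone C → C ≠ Set.univ →
        ∃ M : Set (Ops A), IsMaximalClone M ∧ C ⊆ M) ∧
    {M : Set (Ops A) | IsMaximalClone M}.Finite :=
  kuznetsov_maximal_clones_general
end

section
/- Every maximal clone on a finite set A with |A| ≥ 3 is of the form Pol(ρ) for some relation ρ on A of arity at most |A|. -/
universe u

/-!
It suffices to find a relation `ρ` of arity at most `|A|` with `M ⊆ Pol ρ ≠ O_A`: maximality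
then forces `M = Pol ρ`. For any map `c : Aⁿ → Fin k`, the relation `{v | v ∘ c ∈ M}` is
preserved by `M`.

* If `M` misses a unary operation, let `c` send `x : A¹` to the index of `x 0` in an
  enumeration of `A`.
* Otherwise let `f ∉ M` have the fewest values, `r` of them, and let `c` send `x` to the index
  of `f x` among them. If `r ≥ 3`, the relation contains every non-injective tuple but not the
  tuple of values of `f`, and such a relation is not preserved by every operation.
* If `r = 2`, `M` preserves the non-surjective `|A|`-tuples (Słupecki). A violating `g ∈ M`
  can be normalised to `g (t₁ a, …, tₙ a) = a` with no `tᵢ` surjective. If a binary operation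
  of `M` isolates a corner of some rectangle, `M` computes conjunctions of indicators and so
  contains every two-valued operation, `f` included. If none does, then on two values `g`
  follows a coalition of its arguments; the decisive coalitions are closed under splitting,
  so a single argument `i` is decisive, `tᵢ` is injective and hence surjective.
-/

theorem Set.ncard_range_lt_of_not_injective {α β : Type*} [Finite α] {v : α → β}
    (hv : ¬Function.Injective v) : (Set.range v).ncard < Nat.card α := by
  rw [← Set.image_univ, ← Set.ncard_univ]
  refine (Set.ncard_image_le).lt_of_ne fun h => hv ?_
  exact Set.injOn_univ.1 (Set.injOn_of_ncard_image_eq h)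

/-- Composed with a unary map sending `v a₁ b₁` to one value and everything else to another,
`v` computes a conjunction on `{a₀, a₁} × {b₀, b₁}`. -/
def HasIsolatedCorner {A : Type*} (v : A → A → A) : Prop :=
  ∃ a₀ a₁ b₀ b₁, a₀ ≠ a₁ ∧ b₀ ≠ b₁ ∧
    v a₁ b₁ ≠ v a₀ b₀ ∧ v a₁ b₁ ≠ v a₀ b₁ ∧ v a₁ b₁ ≠ v a₁ b₀

theorem corner_eq_of_not_hasIsolatedCorner {A : Type*} {v : A → A → A}
    (hv : ¬HasIsolatedCorner v) {a₀ a₁ b₀ b₁ : A} (ha : a₀ ≠ a₁) (hb : b₀ ≠ b₁) :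
    v a₁ b₁ = v a₀ b₀ ∨ v a₁ b₁ = v a₀ b₁ ∨ v a₁ b₁ = v a₁ b₀ := by
  by_contra! h
  exact hv ⟨a₀, a₁, b₀, b₁, ha, hb, h⟩

namespace Coalition

variable {ι A : Type*} (Ψ : (ι → A) → A)

open Classical in
noncomputable def blend (S : Set ι) (u w : A) : A := Ψ fun i => if i ∈ S then u else w

def IsDecisive (S : Set ι) : Prop := ∀ u w, blend Ψ S u w = u

variable {Ψ} (hdiag : ∀ a, Ψ (fun _ => a) = a)
include hdiag

theorem blend_self (S : Set ι) (a : A) : blend Ψ S a a = a := by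
  simp [blend, hdiag]

theorem isDecisive_univ : IsDecisive Ψ Set.univ := by
  simp [IsDecisive, blend, hdiag]

theorem not_isDecisive_empty [Nontrivial A] : ¬IsDecisive Ψ (∅ : Set ι) := by
  obtain ⟨a, b, hab⟩ := exists_pair_ne A
  intro h
  simpa [blend, hdiag, eq_comm, hab] using h a b

variable (hcorner : ∀ (κ : ι → Fin 3) (c : A),
  ¬HasIsolatedCorner fun u w => Ψ fun i => ![u, w, c] (κ i))
include hcorner

omit hdiag in
theorem not_hasIsolatedCorner_blend (S : Set ι) : ¬HasIsolatedCorner (blend Ψ S) := by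
  classical
  intro h
  obtain ⟨c, -⟩ := id h
  refine hcorner (fun i => if i ∈ S then 0 else 1) c ?_
  convert h using 3
  unfold blend
  congr! 2 with i
  split_ifs <;> rfl

theorem blend_eq_or {S : Set ι} {u w : A} (huw : u ≠ w) :
    (blend Ψ S u w = u ∧ blend Ψ S w u = w) ∨ (blend Ψ S u w = w ∧ blend Ψ S w u = u) := by
  have h := not_hasIsolatedCorner_blend hcorner S
  have h₁ := corner_eq_of_not_hasIsolatedCorner h huw.symm huw.symm
  have h₂ := corner_eq_of_not_hasIsolatedCorner h huw huw
  simp only [blend_self hdiag] at h₁ h₂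
  grind

theorem blend_eq_left_of_ne {S : Set ι} {a c c' : A} (hc : a ≠ c) (hc' : a ≠ c')
    (h : blend Ψ S a c = a) : blend Ψ S a c' = a := by
  rcases eq_or_ne c c' with rfl | hcc'
  · exact h
  have hsq := corner_eq_of_not_hasIsolatedCorner (not_hasIsolatedCorner_blend hcorner S)
    hc.symm hcc'.symm
  have h₁ := blend_eq_or hdiag hcorner (S := S) hc'
  have h₂ := blend_eq_or hdiag hcorner (S := S) hcc'
  rw [blend_self hdiag] at hsq
  grind

theorem isDecisive_of_blend_eq {S : Set ι} {a b : A} (hab : a ≠ b) (h : blend Ψ S a b = a) :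
    IsDecisive Ψ S := by
  have hfrom (x : A) (hx : a ≠ x) : blend Ψ S a x = a := blend_eq_left_of_ne hdiag hcorner hab hx h
  have hto (x : A) (hx : x ≠ a) : blend Ψ S x a = x := by
    have := blend_eq_or hdiag hcorner (S := S) hx.symm
    grind
  intro u w
  rcases eq_or_ne u w with rfl | huw
  · exact blend_self hdiag S u
  rcases eq_or_ne u a with rfl | hua
  · exact hfrom w huw
  · exact blend_eq_left_of_ne hdiag hcorner hua huw (hto u hua)

theorem blend_eq_right_of_not_isDecisive {S : Set ι} (hS : ¬IsDecisive Ψ S) (u w : A) :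
    blend Ψ S u w = w := by
  rcases eq_or_ne u w with rfl | huw
  · exact blend_self hdiag S u
  rcases blend_eq_or hdiag hcorner (S := S) huw with h | h
  · exact absurd (isDecisive_of_blend_eq hdiag hcorner huw h.1) hS
  · exact h.1

theorem isDecisive_or_of_disjoint [Nontrivial A] {Y Z : Set ι} (hYZ : Disjoint Y Z)
    (h : IsDecisive Ψ (Y ∪ Z)) : IsDecisive Ψ Y ∨ IsDecisive Ψ Z := by
  classical
  by_contra! hYZ'
  obtain ⟨hY, hZ⟩ := hYZ'
  obtain ⟨a, b, hab⟩ := exists_pair_ne A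
  -- Feed `u` to `Y`, the constant `b` to `Z` and `w` to the rest: the corner `(a, a)` is isolated.
  let κ : ι → Fin 3 := fun i => if i ∈ Y then 0 else if i ∈ Z then 2 else 1
  have hκ (u w : A) : (fun i => ![u, w, b] (κ i)) =
      fun i => if i ∈ Y then u else if i ∈ Z then b else w := by
    funext i
    by_cases hiY : i ∈ Y
    · simp [κ, hiY]
    · by_cases hiZ : i ∈ Z <;> simp [κ, hiY, hiZ]
  have hv {S : Set ι} {u w x y : A}
      (h : ∀ i, (if i ∈ Y then u else if i ∈ Z then b else w) = if i ∈ S then x else y) :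
      (Ψ fun i => if i ∈ Y then u else if i ∈ Z then b else w) = blend Ψ S x y :=
    congrArg Ψ (funext h)
  have hZY : ∀ i ∈ Z, i ∉ Y := fun i hi hi' => Set.disjoint_left.1 hYZ hi' hi
  have haa : (Ψ fun i => if i ∈ Y then a else if i ∈ Z then b else a) = a := by
    rw [hv (S := Z) (x := b) (y := a), blend_eq_right_of_not_isDecisive hdiag hcorner hZ]
    intro i; by_cases hi : i ∈ Z <;> simp [hi, hZY]
  have hba : (Ψ fun i => if i ∈ Y then b else if i ∈ Z then b else a) = b := by
    rw [hv (S := Y ∪ Z) (x := b) (y := a), h]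
    intro i; by_cases hi : i ∈ Y <;> simp [hi]
  have hab' : blend Ψ Y a b = b := blend_eq_right_of_not_isDecisive hdiag hcorner hY a b
  apply hcorner κ b
  refine ⟨b, a, b, a, hab.symm, hab.symm, ?_⟩
  simp only [hκ, haa, hba, ite_self, hdiag]
  exact ⟨hab, hab, fun h' => hab (h'.trans hab')⟩

theorem exists_isDecisive_singleton [Finite ι] [Nontrivial A] : ∃ i, IsDecisive Ψ {i} := by
  classical
  have := Fintype.ofFinite ι
  by_contra! h
  have hfin (s : Finset ι) : ¬IsDecisive Ψ (s : Set ι) := by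
    induction s using Finset.induction_on with
    | empty => simpa using not_isDecisive_empty hdiag
    | insert a s ha ih =>
      rw [Finset.coe_insert, Set.insert_eq]
      intro hs
      rcases isDecisive_or_of_disjoint hdiag hcorner (Set.disjoint_singleton_left.2 ha) hs
        with h' | h'
      exacts [h a h', ih h']
  exact hfin Finset.univ (by simpa using isDecisive_univ hdiag)

end Coalition

open Coalition in
theorem exists_injective_of_not_hasIsolatedCorner {ι A : Type*} [Finite ι] [Nontrivial A]
    (g : (ι → A) → A) (t : ι → A → A) (hdiag : ∀ a, g (fun i => t i a) = a)
    (hcorner : ∀ (κ : ι → Fin 3) (c : A),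
      ¬HasIsolatedCorner fun u w => g fun i => t i (![u, w, c] (κ i))) :
    ∃ i, Function.Injective (t i) := by
  classical
  let Ψ : (ι → A) → A := fun y => g fun i => t i (y i)
  obtain ⟨i, hi⟩ := exists_isDecisive_singleton (Ψ := Ψ) hdiag hcorner
  refine ⟨i, fun u u' h => ?_⟩
  obtain ⟨w⟩ : Nonempty A := inferInstance
  calc u = blend Ψ {i} u w := (hi u w).symm
    _ = blend Ψ {i} u' w := by
      refine congrArg g (funext fun j => ?_)
      by_cases hj : j = i
      · subst hj; simpa using h
      · simp [hj]
    _ = u' := hi u' w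

namespace Ops

abbrev unary {A : Type u} (θ : A → A) : Ops A := ⟨0, fun x => θ (x 0)⟩

abbrev binary {A : Type u} (v : A → A → A) : Ops A := ⟨1, fun x => v (x 0) (x 1)⟩

end Ops

theorem isClone_Pol {A : Type u} {k : ℕ} (ρ : Set (Fin k → A)) : IsClone (Pol ρ) :=
  ⟨fun _ i _ ht => ht i, fun _ _ _ _ hf hg _ ht => hf _ fun i => hg i _ ht⟩

def factorRel {A : Type u} (M : Set (Ops A)) {n k : ℕ} (c : (Fin (n + 1) → A) → Fin k) :
    Set (Fin k → A) :=
  {v | (⟨n, fun x => v (c x)⟩ : Ops A) ∈ M}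

open Classical in
def HasIndicators {A : Type u} (M : Set (Ops A)) {m : ℕ} (S : Set (Fin (m + 1) → A)) : Prop :=
  ∀ p q : A, (⟨m, fun x => if x ∈ S then p else q⟩ : Ops A) ∈ M

theorem HasIndicators.compl {A : Type u} {M : Set (Ops A)} {m : ℕ} {S : Set (Fin (m + 1) → A)}
    (h : HasIndicators M S) : HasIndicators M Sᶜ := by
  classical
  intro p q
  simpa [ite_not] using h q p

namespace IsClone

variable {A : Type u} {M : Set (Ops A)} (hC : IsClone M)
include hC

theorem subset_Pol_factorRel {n k : ℕ} (c : (Fin (n + 1) → A) → Fin k) :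
    M ⊆ Pol (factorRel M c) := by
  rintro ⟨m, f⟩ hf t ht
  exact hC.2 m n f (fun i x => t i (c x)) hf ht

theorem unary_comp_mem {θ : A → A} (hθ : Ops.unary θ ∈ M) {n : ℕ}
    {f : (Fin (n + 1) → A) → A} (hf : ⟨n, f⟩ ∈ M) : (⟨n, fun x => θ (f x)⟩ : Ops A) ∈ M :=
  hC.2 0 n _ (fun _ => f) hθ fun _ => hf

theorem binary_comp_mem {v : A → A → A} (hv : Ops.binary v ∈ M) {n : ℕ}
    {f₁ f₂ : (Fin (n + 1) → A) → A} (hf₁ : ⟨n, f₁⟩ ∈ M) (hf₂ : ⟨n, f₂⟩ ∈ M) :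
    (⟨n, fun x => v (f₁ x) (f₂ x)⟩ : Ops A) ∈ M :=
  hC.2 1 n _ ![f₁, f₂] hv (Fin.forall_fin_two.2 ⟨hf₁, hf₂⟩)

theorem exists_subset_Pol_of_unary_not_mem {k : ℕ} (e : Fin k ≃ A) {θ : A → A}
    (hθ : Ops.unary θ ∉ M) : ∃ ρ : Set (Fin k → A), M ⊆ Pol ρ ∧ Pol ρ ≠ Set.univ := by
  refine ⟨factorRel M fun x : Fin 1 → A => e.symm (x 0), hC.subset_Pol_factorRel _, fun h => ?_⟩
  have he : ⇑e ∈ factorRel M fun x : Fin 1 → A => e.symm (x 0) := by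
    simpa [factorRel] using hC.1 0 0
  have := (h ▸ Set.mem_univ _ : Ops.unary θ ∈ Pol _) (fun _ => e) fun _ => he
  exact hθ (by simpa [factorRel] using this)

section AllUnary

variable (hU : ∀ θ : A → A, Ops.unary θ ∈ M)
include hU

theorem minor_mem {n m : ℕ} {f : (Fin (n + 1) → A) → A} (hf : ⟨n, f⟩ ∈ M)
    (σ : Fin (n + 1) → Fin (m + 1)) (θ : Fin (n + 1) → A → A) :
    (⟨m, fun x => f fun i => θ i (x (σ i))⟩ : Ops A) ∈ M :=
  hC.2 n m f _ hf fun i => hC.unary_comp_mem (hU (θ i)) (hC.1 m (σ i))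

theorem const_mem (m : ℕ) (c : A) : (⟨m, fun _ => c⟩ : Ops A) ∈ M :=
  hC.unary_comp_mem (hU fun _ => c) (hC.1 m 0)

theorem binary_pattern_mem {n : ℕ} {g : (Fin (n + 1) → A) → A} (hg : ⟨n, g⟩ ∈ M)
    (θ : Fin (n + 1) → A → A) (κ : Fin (n + 1) → Fin 3) (c : A) :
    Ops.binary (fun u w => g fun i => θ i (![u, w, c] (κ i))) ∈ M := by
  convert hC.minor_mem hU hg (fun i => if κ i = 1 then 1 else 0)
    (fun i a => θ i (![a, a, c] (κ i))) using 4 with x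
  funext i
  generalize κ i = k
  fin_cases k <;> rfl

variable {m : ℕ}

open Classical in
theorem hasIndicators_of_mem {S : Set (Fin (m + 1) → A)} {p q : A} (hpq : p ≠ q)
    (h : (⟨m, fun x => if x ∈ S then p else q⟩ : Ops A) ∈ M) : HasIndicators M S := by
  intro p' q'
  convert hC.unary_comp_mem (hU fun z => if z = p then p' else q') h using 3 with x
  by_cases hx : x ∈ S <;> simp [hx, hpq.symm]

theorem hasIndicators_univ : HasIndicators M (Set.univ : Set (Fin (m + 1) → A)) := by
  classical
  intro p q
  simpa using hC.const_mem hU m p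

theorem hasIndicators_coord_eq (j : Fin (m + 1)) (a : A) : HasIndicators M {x | x j = a} := by
  classical
  intro p q
  simpa using hC.unary_comp_mem (hU fun z => if z = a then p else q) (hC.1 m j)

variable {v : A → A → A} (hv : Ops.binary v ∈ M) (hcorner : HasIsolatedCorner v)
include hv hcorner

theorem hasIndicators_inter {S T : Set (Fin (m + 1) → A)} (hS : HasIndicators M S)
    (hT : HasIndicators M T) : HasIndicators M (S ∩ T) := by
  classical
  obtain ⟨a₀, a₁, b₀, b₁, ha, hb, h₀₀, h₀₁, h₁₀⟩ := hcorner
  refine hasIndicators_of_mem hC hU ha.symm (p := a₁) (q := a₀) ?_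
  convert hC.unary_comp_mem (hU fun z => if z = v a₁ b₁ then a₁ else a₀)
    (hC.binary_comp_mem hv (hS a₁ a₀) (hT b₁ b₀)) using 3 with x
  by_cases hxS : x ∈ S <;> by_cases hxT : x ∈ T <;> simp [hxS, hxT, h₀₀.symm, h₀₁.symm, h₁₀.symm]

theorem hasIndicators_biInter {ι : Type*} (s : Finset ι) {S : ι → Set (Fin (m + 1) → A)}
    (hS : ∀ i ∈ s, HasIndicators M (S i)) : HasIndicators M (⋂ i ∈ s, S i) := by
  classical
  induction s using Finset.induction_on with
  | empty => simpa using hasIndicators_univ hC hU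
  | insert a s ha ih =>
    rw [Finset.set_biInter_insert]
    exact hasIndicators_inter hC hU hv hcorner (hS a (by simp)) (ih fun i hi => hS i (by simp [hi]))

variable [Finite A]

theorem hasIndicators (S : Set (Fin (m + 1) → A)) : HasIndicators M S := by
  have hsingleton (y : Fin (m + 1) → A) : HasIndicators M {y} := by
    have : {y} = ⋂ j ∈ Finset.univ, {x : Fin (m + 1) → A | x j = y j} := by
      ext x; simp [funext_iff]
    rw [this]
    exact hasIndicators_biInter hC hU hv hcorner _ fun j _ => hasIndicators_coord_eq hC hU j (y j)
  have : S = ⋂ y ∈ (Set.toFinite Sᶜ).toFinset, ({y} : Set _)ᶜ := by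
    ext x
    simp only [Set.Finite.mem_toFinset, Set.mem_compl_iff, Set.mem_iInter, Set.mem_singleton_iff]
    exact ⟨fun hx y hy hxy => hy (hxy ▸ hx), fun h => by_contra fun hx => h x hx rfl⟩
  rw [this]
  exact hasIndicators_biInter hC hU hv hcorner _ fun y _ => HasIndicators.compl (hsingleton y)

theorem mem_of_forall_eq_or_eq {f : (Fin (m + 1) → A) → A} {p q : A}
    (hf : ∀ x, f x = p ∨ f x = q) : (⟨m, f⟩ : Ops A) ∈ M := by
  classical
  convert hasIndicators hC hU hv hcorner {x | f x = p} p q using 3 with x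
  rcases hf x with hx | hx <;> simp [hx]

end AllUnary

theorem subset_Pol_not_surjective [Finite A] [Nontrivial A]
    (hU : ∀ θ : A → A, Ops.unary θ ∈ M) {n : ℕ} {f : (Fin (n + 1) → A) → A} {p q : A}
    (hf : (⟨n, f⟩ : Ops A) ∉ M) (hpq : ∀ x, f x = p ∨ f x = q) (k : ℕ) :
    M ⊆ Pol {v : Fin k → A | ¬Function.Surjective v} := by
  rintro ⟨m, g⟩ hg t ht
  by_contra hrow
  replace hrow := not_not.1 hrow
  by_cases hcorner : ∃ v, Ops.binary v ∈ M ∧ HasIsolatedCorner v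
  · obtain ⟨v, hv, hvc⟩ := hcorner
    exact hf (hC.mem_of_forall_eq_or_eq hU hv hvc hpq)
  · simp only [not_exists, not_and] at hcorner
    let s := Function.surjInv hrow
    obtain ⟨i, hi⟩ := exists_injective_of_not_hasIsolatedCorner g (fun i a => t i (s a))
      (Function.surjInv_eq hrow)
      fun κ c => hcorner _ (hC.binary_pattern_mem hU hg (fun i a => t i (s a)) κ c)
    exact ht i (Finite.injective_iff_surjective.1 hi).of_comp

end IsClone

theorem Pol_not_surjective_ne_univ {A : Type u} {k : ℕ} (e : Fin k ≃ A) {α β γ : A}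
    (hαβ : α ≠ β) (hαγ : α ≠ γ) (hβγ : β ≠ γ) :
    Pol {v : Fin k → A | ¬Function.Surjective v} ≠ Set.univ := by
  classical
  intro h
  have hpres : Preserves (fun x : Fin 2 → A => if x 0 = β then α else x 1)
      {v : Fin k → A | ¬Function.Surjective v} :=
    (h ▸ Set.mem_univ _ : (⟨1, fun x => if x 0 = β then α else x 1⟩ : Ops A) ∈ Pol _)
  have hmiss (v : Fin k → A) (hv : ∀ j, v j ≠ α) : ¬Function.Surjective v := fun hs =>
    (hs α).elim fun j hj => hv j hj
  refine hpres ![fun j => if e j = α then β else γ, fun j => if e j = α then β else e j]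
    (Fin.forall_fin_two.2 ⟨hmiss _ fun j => ?_, hmiss _ fun j => ?_⟩) fun a => ⟨e.symm a, ?_⟩
  · simp only [Matrix.cons_val_zero]; split_ifs <;> grind
  · simp only [Matrix.cons_val_one, Matrix.cons_val_zero]; split_ifs <;> grind
  · by_cases ha : a = α <;> simp [ha, hβγ.symm]

theorem Pol_ne_univ_of_not_injective_mem {A : Type u} {m : ℕ} (hm : 2 ≤ m)
    {ρ : Set (Fin (m + 1) → A)} (hρ : ∀ v, ¬Function.Injective v → v ∈ ρ)
    {w : Fin (m + 1) → A} (hw : Function.Injective w) (hwρ : w ∉ ρ) : Pol ρ ≠ Set.univ := by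
  have : Nontrivial (Fin (m + 1)) := Fin.nontrivial_iff_two_le.2 (by omega)
  choose other hother using fun c : Fin (m + 1) => exists_ne c
  -- Column `c₀` is `w` with index `c₀` merged into another one; any two rows differ at a
  -- third index, so some operation maps each row `c` to `w c`.
  let merge (c₀ : Fin (m + 1)) : Fin (m + 1) → Fin (m + 1) := Function.update id c₀ (other c₀)
  have hcol (c₀ : Fin (m + 1)) : (fun c => w (merge c₀ c)) ∈ ρ := by
    refine hρ _ fun hinj => hother c₀ (hinj ?_)
    simp [merge, Function.update_of_ne (hother c₀)]
  let row (c : Fin (m + 1)) (c₀ : Fin (m + 1)) : A := w (merge c₀ c)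
  have hrow : Function.Injective row := by
    intro c c' hcc'
    obtain ⟨c₀, hc, hc'⟩ :=
      ENat.exists_ne_ne_of_three_le (by simp; exact_mod_cast (by omega : 3 ≤ m + 1)) c c'
    simpa [row, merge, Function.update_of_ne hc.symm, Function.update_of_ne hc'.symm, hw.eq_iff]
      using congrFun hcc' c₀
  intro h
  apply hwρ
  have hF := (h ▸ Set.mem_univ _ : (⟨m, Function.extend row w fun _ => w 0⟩ : Ops A) ∈ Pol ρ)
  simpa only [row, hrow.extend_apply] using hF (fun c₀ c => w (merge c₀ c)) hcol

namespace IsClone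

variable {A : Type u} {M : Set (Ops A)} (hC : IsClone M)
include hC

theorem exists_subset_Pol_of_minimal_range [Finite A] {n : ℕ} {f : (Fin (n + 1) → A) → A}
    (hf : (⟨n, f⟩ : Ops A) ∉ M)
    (hmin : ∀ q : Ops A, (Set.range q.2).ncard < (Set.range f).ncard → q ∈ M)
    {m : ℕ} (hr : (Set.range f).ncard = m + 1) (hm : 2 ≤ m) :
    ∃ ρ : Set (Fin (m + 1) → A), M ⊆ Pol ρ ∧ Pol ρ ≠ Set.univ := by
  have hcard : Nat.card (Set.range f) = m + 1 := by rwa [Nat.card_coe_set_eq]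
  let w : Fin (m + 1) ≃ Set.range f := (Finite.equivFinOfCardEq hcard).symm
  let c x : Fin (m + 1) := w.symm ⟨f x, Set.mem_range_self x⟩
  refine ⟨factorRel M c, hC.subset_Pol_factorRel c,
    Pol_ne_univ_of_not_injective_mem hm (fun v hv => hmin _ ?_) (w := fun i => w i)
      (Subtype.val_injective.comp w.injective) (by simpa [factorRel, c] using hf)⟩
  calc (Set.range fun x => v (c x)).ncard ≤ (Set.range v).ncard :=
        Set.ncard_le_ncard (Set.range_comp_subset_range c v)
    _ < m + 1 := by simpa using Set.ncard_range_lt_of_not_injective hv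
    _ = (Set.range f).ncard := hr.symm

variable [Fintype A]

theorem exists_subset_Pol_of_forall_unary_mem (hA : 3 ≤ Fintype.card A) (hM : M ≠ Set.univ)
    (hU : ∀ θ : A → A, Ops.unary θ ∈ M) :
    ∃ (m : ℕ) (ρ : Set (Fin (m + 1) → A)),
      m + 1 ≤ Fintype.card A ∧ M ⊆ Pol ρ ∧ Pol ρ ≠ Set.univ := by
  obtain ⟨⟨n, f⟩, hf, hmin⟩ := (measure fun q : Ops A => (Set.range q.2).ncard).wf.has_min
    {q | q ∉ M} (Set.nonempty_compl.2 hM)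
  replace hmin (q : Ops A) (hq : (Set.range q.2).ncard < (Set.range f).ncard) : q ∈ M :=
    by_contra fun hqM => hmin q hqM hq
  have hle : (Set.range f).ncard ≤ Fintype.card A := by
    simpa using Set.ncard_le_ncard (Set.subset_univ (Set.range f))
  have hge : 2 ≤ (Set.range f).ncard := by
    have : Nonempty A := Fintype.card_pos_iff.1 (by omega)
    have hpos : 0 < (Set.range f).ncard := (Set.ncard_pos).2 (Set.range_nonempty f)
    by_contra! h1
    obtain ⟨c, hc⟩ := Set.ncard_eq_one.1 (by omega : (Set.range f).ncard = 1)
    exact hf (Set.range_subset_singleton.1 hc.subset ▸ hC.const_mem hU n c)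
  obtain ⟨m, hm⟩ : ∃ m, (Set.range f).ncard = m + 1 :=
    ⟨_, (Nat.succ_pred_eq_of_pos (by omega)).symm⟩
  rcases eq_or_lt_of_le hge with h2 | h3
  · obtain ⟨p, q, -, hpq⟩ := Set.ncard_eq_two.1 h2.symm
    have hf2 (x : Fin (n + 1) → A) : f x = p ∨ f x = q := by
      simpa [hpq] using Set.mem_range_self (f := f) x
    obtain ⟨k, hk⟩ : ∃ k, Fintype.card A = k + 1 :=
      ⟨_, (Nat.succ_pred_eq_of_pos (by omega)).symm⟩
    obtain ⟨α, β, γ, hαβ, hαγ, hβγ⟩ := Fintype.two_lt_card_iff.1 hA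
    have : Nontrivial A := ⟨⟨α, β, hαβ⟩⟩
    exact ⟨k, _, hk.ge, hC.subset_Pol_not_surjective hU hf hf2 (k + 1),
      Pol_not_surjective_ne_univ (Fintype.equivFinOfCardEq hk).symm hαβ hαγ hβγ⟩
  · obtain ⟨ρ, hρ⟩ := hC.exists_subset_Pol_of_minimal_range hf hmin hm (by omega)
    exact ⟨m, ρ, by omega, hρ⟩

theorem exists_subset_Pol (hA : 3 ≤ Fintype.card A) (hM : M ≠ Set.univ) :
    ∃ (m : ℕ) (ρ : Set (Fin (m + 1) → A)),
      m + 1 ≤ Fintype.card A ∧ M ⊆ Pol ρ ∧ Pol ρ ≠ Set.univ := by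
  by_cases hU : ∀ θ : A → A, Ops.unary θ ∈ M
  · exact hC.exists_subset_Pol_of_forall_unary_mem hA hM hU
  · obtain ⟨θ, hθ⟩ := not_forall.1 hU
    obtain ⟨k, hk⟩ : ∃ k, Fintype.card A = k + 1 :=
      ⟨_, (Nat.succ_pred_eq_of_pos (by omega)).symm⟩
    obtain ⟨ρ, hρ⟩ := hC.exists_subset_Pol_of_unary_not_mem (Fintype.equivFinOfCardEq hk).symm hθ
    exact ⟨k, ρ, hk.ge, hρ⟩

end IsClone

/-- Every maximal clone on a finite set `A` with `|A| ≥ 3` is of the form `Pol ρ`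
for some relation `ρ` on `A` of arity at most `|A|`. -/
theorem maximal_clone_is_Pol {A : Type u} [Fintype A] (hA : 3 ≤ Fintype.card A) :
    ∀ M : Set (Ops A), IsMaximalClone M →
      ∃ (m : ℕ) (ρ : Set (Fin (m + 1) → A)), m + 1 ≤ Fintype.card A ∧ M = Pol ρ := by
  rintro M ⟨hC, hM, hmax⟩
  obtain ⟨m, ρ, hm, hsub, hρ⟩ := hC.exists_subset_Pol hA hM
  exact ⟨m, ρ, hm, ((hmax _ (isClone_Pol ρ) hsub).resolve_right hρ).symm⟩
end

section
/- Świerczkowski's Lemma. Let A be a set and let f be an n-ary operation on A with n ≥ 4 such that identifying any two variables of f yields a projection (i.e. for all indices j ≠ k, the operation obtained from f by substituting the same variable into the j-th and k-th argument positions is a projection operation). Then there exists an index i with 1 ≤ i ≤ n such that f(y₁,…,yₙ) = yᵢ for every tuple (y₁,…,yₙ) ∈ Aⁿ in which at least two of the entries y₁,…,yₙ coincide. -/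
universe u

private lemma exists_fourth {n : ℕ} (hn : 4 ≤ n) (s t u : Fin n) :
    ∃ w : Fin n, w ≠ s ∧ w ≠ t ∧ w ≠ u := by
  have h1 : ({s, t, u} : Finset (Fin n)).card ≤ 3 :=
    (Finset.card_insert_le _ _).trans (Nat.succ_le_succ
      ((Finset.card_insert_le _ _).trans (by simp)))
  have h2 : (({s, t, u} : Finset (Fin n))ᶜ).Nonempty := by
    rw [← Finset.card_pos, Finset.card_compl, Fintype.card_fin]
    omega
  obtain ⟨w, hw⟩ := h2
  simp only [Finset.mem_compl, Finset.mem_insert, Finset.mem_singleton, not_or] at hw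
  exact ⟨w, hw.1, hw.2.1, hw.2.2⟩

private lemma swier_aux {A : Type u} {n : ℕ} (hn : 4 ≤ n) (f : (Fin n → A) → A)
    {a b : A} (hab : a ≠ b)
    (P : ∀ j k : Fin n, j ≠ k → ∃ i : Fin n, ∀ y : Fin n → A, y j = y k → f y = y i)
    {j k s t c : Fin n} (hjk : j ≠ k) (hsj : s ≠ j) (hsk : s ≠ k) (hst : s ≠ t)
    (Hp : ∀ y : Fin n → A, y j = y k → f y = y s)
    (Hc : ∀ y : Fin n → A, y s = y t → f y = y c)
    (y : Fin n → A) (hy : y s = y t) : f y = y s := by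
  rw [Hc y hy]
  rcases eq_or_ne c s with rfl | hcs
  · rfl
  rcases eq_or_ne c t with rfl | hct
  · exact hy.symm
  exfalso
  by_cases htjk : t = j ∨ t = k
  · -- {j,k} = {t,u}
    obtain ⟨u, hut, hus, Hp'⟩ : ∃ u : Fin n, u ≠ t ∧ u ≠ s ∧
        ∀ y : Fin n → A, y t = y u → f y = y s := by
      rcases htjk with rfl | rfl
      · exact ⟨k, hjk.symm, hsk.symm, fun y hy => Hp y hy⟩
      · exact ⟨j, fun e => hjk e, hsj.symm, fun y hy => Hp y hy.symm⟩
    -- show c ∈ {s,t,u}, i.e. c = u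
    have hcu : c = u := by
      set y3 : Fin n → A := fun v => if v = s ∨ v = t ∨ v = u then a else b with hy3
      have e1 : f y3 = y3 s := Hp' y3 (by simp [hy3])
      have e2 : f y3 = y3 c := Hc y3 (by simp [hy3])
      by_contra hcu
      rw [e1] at e2
      simp [hy3, hcs, hct, hcu] at e2
      exact hab e2
    obtain ⟨w, hws, hwt, hwu⟩ := exists_fourth hn s t u
    obtain ⟨d, Hd⟩ := P t w (fun e => hwt e.symm)
    have hds : d = s := by
      set y4 : Fin n → A := fun v => if v = s then a else b with hy4
      have e1 : f y4 = y4 s := Hp' y4 (by simp [hy4, hst.symm, hus])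
      have e2 : f y4 = y4 d := Hd y4 (by simp [hy4, hst.symm, hws])
      by_contra hds
      rw [e1] at e2
      simp [hy4, hds] at e2
      exact hab e2
    set y5 : Fin n → A := fun v => if v = s ∨ v = t ∨ v = w then a else b with hy5
    have e1 : f y5 = y5 c := Hc y5 (by simp [hy5])
    have e2 : f y5 = y5 d := Hd y5 (by simp [hy5])
    rw [e1] at e2
    rw [hcu, hds] at e2
    simp [hy5, hus, hut, hwu.symm] at e2
    exact hab e2.symm
  · push_neg at htjk
    set y2 : Fin n → A := fun v => if v = s ∨ v = t then a else b with hy2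
    have e1 : f y2 = y2 s := Hp y2 (by simp [hy2, hsj.symm, hsk.symm, htjk.1.symm, htjk.2.symm])
    have e2 : f y2 = y2 c := Hc y2 (by simp [hy2])
    rw [e1] at e2
    simp [hy2, hcs, hct] at e2
    exact hab e2

/-- **Świerczkowski's Lemma.**  Let `f` be an `n`-ary operation with `n ≥ 4` such that
identifying any two variables of `f` yields a projection.  Then there is an index `i`
such that `f y = y i` for every tuple `y` in which at least two entries coincide. -/
theorem swierczkowski {A : Type u} {n : ℕ} (hn : 4 ≤ n) (f : (Fin n → A) → A)
    (h : ∀ j k : Fin n, j ≠ k →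
        ∃ i : Fin n, ∀ x : Fin n → A, f (Function.update x k (x j)) = x i) :
    ∃ i : Fin n, ∀ y : Fin n → A, (∃ j k, j ≠ k ∧ y j = y k) → f y = y i := by
  rcases subsingleton_or_nontrivial A with hA | hA
  · exact ⟨⟨0, by omega⟩, fun y _ => Subsingleton.elim _ _⟩
  obtain ⟨a, b, hab⟩ := exists_pair_ne A
  -- clean form of the hypothesis
  have P : ∀ j k : Fin n, j ≠ k → ∃ i : Fin n, ∀ y : Fin n → A, y j = y k → f y = y i := by
    intro j k hjk
    obtain ⟨i, hi⟩ := h j k hjk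
    refine ⟨i, fun y hy => ?_⟩
    have hupd : Function.update y k (y j) = y := by
      funext v
      rcases eq_or_ne v k with rfl | hv
      · simp [hy]
      · simp [Function.update_of_ne hv]
    have := hi y
    rwa [hupd] at this
  -- find a pair whose identification projects outside the pair
  have h01 : (⟨0, by omega⟩ : Fin n) ≠ ⟨1, by omega⟩ := by simp [Fin.ext_iff]
  have h23 : (⟨2, by omega⟩ : Fin n) ≠ ⟨3, by omega⟩ := by simp [Fin.ext_iff]
  obtain ⟨i1, H1⟩ := P _ _ h01
  obtain ⟨i2, H2⟩ := P _ _ h23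
  obtain ⟨j, k, s, hjk, hsj, hsk, Hp⟩ : ∃ j k s : Fin n, j ≠ k ∧ s ≠ j ∧ s ≠ k ∧
      ∀ y : Fin n → A, y j = y k → f y = y s := by
    by_cases hA1 : i1 = ⟨0, by omega⟩ ∨ i1 = ⟨1, by omega⟩
    · by_cases hA2 : i2 = ⟨2, by omega⟩ ∨ i2 = ⟨3, by omega⟩
      · exfalso
        set y0 : Fin n → A := fun v =>
          if v = (⟨0, by omega⟩ : Fin n) ∨ v = (⟨1, by omega⟩ : Fin n) then a else b with hy0
        have e1 : f y0 = y0 i1 := H1 y0 (by simp [hy0])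
        have e2 : f y0 = y0 i2 := H2 y0 (by simp [hy0, Fin.ext_iff])
        have v1 : y0 i1 = a := by rcases hA1 with rfl | rfl <;> simp [hy0]
        have v2 : y0 i2 = b := by
          rcases hA2 with rfl | rfl <;> simp [hy0, Fin.ext_iff]
        rw [e1, v1] at e2
        rw [v2] at e2
        exact hab e2
      · push_neg at hA2
        exact ⟨_, _, i2, h23, hA2.1, hA2.2, H2⟩
    · push_neg at hA1
      exact ⟨_, _, i1, h01, hA1.1, hA1.2, H1⟩
  refine ⟨s, fun y ⟨σ, τ, hστ, hy⟩ => ?_⟩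
  obtain ⟨c, Hc⟩ := P σ τ hστ
  rcases eq_or_ne s σ with rfl | hsσ
  · exact swier_aux hn f hab P hjk hsj hsk hστ Hp Hc y hy
  rcases eq_or_ne s τ with rfl | hsτ
  · exact swier_aux hn f hab P hjk hsj hsk (fun e => hστ e.symm) Hp
      (fun z hz => Hc z hz.symm) y hy.symm
  -- s outside the pair: identification must project onto s
  have hcs : c = s := by
    set y1 : Fin n → A := fun v => if v = s then a else b with hy1
    have e1 : f y1 = y1 s := Hp y1 (by simp [hy1, hsj.symm, hsk.symm])
    have e2 : f y1 = y1 c := Hc y1 (by simp [hy1, hsσ.symm, hsτ.symm])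
    by_contra hcs
    rw [e1] at e2
    simp [hy1, hcs] at e2
    exact hab e2
  rw [Hc y hy, hcs]
end
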